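/- Let r ≥ 1 be an integer and for j = 1, …, 4 and h ∈ ℝ set Z_j(h) = (1/2)·cos((r·h + 2π(j−1))/4) + (i/6)·sin(3·(r·h + 2π(j−1))/4). Then for all u ∈ ℂ and h ∈ ℝ, with w = e^{i·r·h} and w̄ = e^{−i·r·h}: 20736·∏_{j=1}^{4} (u − Z_j(h)) = 20736u⁴ − 576u²·(8 + 3(w − w̄)) + (92 − 39w − 231w̄ + 6w² + 30w̄² − w³ − w̄³). -/

import Mathlib

open Complex Real

/-! With `e = exp(i r h / 4)`, the `j`-th strand is `P(i^(j-1) e)` for the Laurent polynomial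
`P(z) = (z + z⁻¹)/4 + (z³ - z⁻³)/12`. As `P` is odd, the four factors pair up into
`(u² - P(e)²)(u² - P(ie)²)`, and `P(ie) = i·q(e)` with `q` again a Laurent polynomial, so the product
is `(u² - P(e)²)(u² + q(e)²)`. Both `144 P(e)²` and `144 q(e)²` are Laurent polynomials in `e²` whose
sum and product only involve `e⁴ = w`, and expanding gives the stated coefficients. -/

/-- The lemniscate point `(1/2) cos θ + (i/6) sin 3θ` written in the variable `z = exp(iθ)`. -/
noncomputable def lemniscatePoint (z : ℂ) : ℂ :=
  (z + z⁻¹) / 4 + (z ^ 3 - z⁻¹ ^ 3) / 12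

lemma lemniscatePoint_neg (z : ℂ) : lemniscatePoint (-z) = -lemniscatePoint z := by
  simp only [lemniscatePoint, inv_neg, Odd.neg_pow (by decide : Odd 3)]
  ring

lemma lemniscatePoint_I_mul (z : ℂ) :
    lemniscatePoint (I * z) = I * ((z - z⁻¹) / 4 - (z ^ 3 + z⁻¹ ^ 3) / 12) := by
  simp only [lemniscatePoint, mul_inv, inv_I, mul_pow, Odd.neg_pow (by decide : Odd 3), I_pow_three]
  ring

lemma ofReal_cos_add_I_mul_sin_eq_lemniscatePoint (θ : ℝ) :
    (((1 / 2 : ℝ) * Real.cos θ : ℝ) : ℂ) + I / 6 * (Real.sin (3 * θ) : ℂ) =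
      lemniscatePoint (exp (θ * I)) := by
  have h3 : exp (θ * I) ^ 3 = exp ((3 * θ : ℝ) * I) := by
    rw [← Complex.exp_nat_mul]; push_cast; ring_nf
  have hcos := two_cos (θ : ℂ)
  have hsin := two_sin ((3 * θ : ℝ) : ℂ)
  rw [neg_mul, Complex.exp_neg] at hcos hsin
  rw [lemniscatePoint, inv_pow, h3]
  push_cast at hsin ⊢
  linear_combination hcos / 4 + I / 12 * hsin
    + ((exp (3 * θ * I))⁻¹ - exp (3 * θ * I)) / 12 * I_sq

lemma exp_add_two_pi_mul_div_four_mul_I (x : ℝ) (k : ℕ) :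
    exp (((x + 2 * π * k) / 4 : ℝ) * I) = I ^ k * exp ((x / 4 : ℝ) * I) := by
  have hIk : I ^ k = exp (k * (π / 2 * I)) := by rw [Complex.exp_nat_mul, exp_pi_div_two_mul_I]
  rw [hIk, ← Complex.exp_add]
  congr 1
  push_cast
  ring_nf

lemma mul_prod_range_four_sub_lemniscatePoint (u e : ℂ) (he : e ≠ 0) :
    20736 * ∏ k ∈ Finset.range 4, (u - lemniscatePoint (I ^ k * e)) =
      20736 * u ^ 4 - 576 * u ^ 2 * (8 + 3 * (e ^ 4 - (e ^ 4)⁻¹))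
        + (92 - 39 * e ^ 4 - 231 * (e ^ 4)⁻¹ + 6 * (e ^ 4) ^ 2 + 30 * (e ^ 4)⁻¹ ^ 2
          - (e ^ 4) ^ 3 - (e ^ 4)⁻¹ ^ 3) := by
  set q := (e - e⁻¹) / 4 - (e ^ 3 + e⁻¹ ^ 3) / 12
  calc _ = 20736 * (u ^ 2 - lemniscatePoint e ^ 2) * (u ^ 2 - (I * q) ^ 2) := by
        simp only [Finset.prod_range_succ, Finset.prod_range_zero, pow_zero, pow_one, I_sq,
          I_pow_three, one_mul, neg_mul, lemniscatePoint_neg, lemniscatePoint_I_mul]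
        ring
    _ = 20736 * (u ^ 2 - lemniscatePoint e ^ 2) * (u ^ 2 + q ^ 2) := by
        rw [mul_pow, I_sq]; ring
    _ = _ := by
        simp only [q, lemniscatePoint]
        field_simp
        ring

theorem four_strand_three_lobe_braid_polynomial_general (r : ℕ) (u : ℂ) (h : ℝ) :
    20736 * ∏ j ∈ Finset.Icc (1 : ℕ) 4,
        (u - ((((1 / 2 : ℝ) * Real.cos ((r * h + 2 * Real.pi * ((j : ℝ) - 1)) / 4) : ℝ) : ℂ) +
          Complex.I / 6 * ((Real.sin (3 * (r * h + 2 * Real.pi * ((j : ℝ) - 1)) / 4) : ℝ) : ℂ))) =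
      20736 * u ^ 4
        - 576 * u ^ 2 * (8 + 3 * (Complex.exp (Complex.I * (r * h : ℝ))
            - Complex.exp (-(Complex.I * (r * h : ℝ)))))
        + (92 - 39 * Complex.exp (Complex.I * (r * h : ℝ))
            - 231 * Complex.exp (-(Complex.I * (r * h : ℝ)))
            + 6 * Complex.exp (Complex.I * (r * h : ℝ)) ^ 2
            + 30 * Complex.exp (-(Complex.I * (r * h : ℝ))) ^ 2
            - Complex.exp (Complex.I * (r * h : ℝ)) ^ 3
            - Complex.exp (-(Complex.I * (r * h : ℝ))) ^ 3) := by
  set e := exp ((r * h / 4 : ℝ) * I)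
  have hw : exp (I * (r * h : ℝ)) = e ^ 4 := by
    rw [← Complex.exp_nat_mul]; push_cast; ring_nf
  have hstrand (k : ℕ) :
      (((1 / 2 : ℝ) * Real.cos ((r * h + 2 * π * (((1 + k : ℕ) : ℝ) - 1)) / 4) : ℝ) : ℂ) +
        I / 6 * ((Real.sin (3 * (r * h + 2 * π * (((1 + k : ℕ) : ℝ) - 1)) / 4) : ℝ) : ℂ) =
        lemniscatePoint (I ^ k * e) := by
    rw [show (((1 + k : ℕ) : ℝ) - 1) = k by push_cast; ring, mul_div_assoc,
      ofReal_cos_add_I_mul_sin_eq_lemniscatePoint, exp_add_two_pi_mul_div_four_mul_I]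
  rw [Complex.exp_neg, hw, ← Finset.Ico_add_one_right_eq_Icc, Finset.prod_Ico_eq_prod_range]
  simp only [hstrand]
  exact mul_prod_range_four_sub_lemniscatePoint u e (exp_ne_zero _)

/-- The identity behind the paper's semiholomorphic polynomial `f^{(4,r,3)}`: with
`Z_j(h) = (1/2)·cos((r·h + 2π(j−1))/4) + (i/6)·sin(3·(r·h + 2π(j−1))/4)`, `w = e^{irh}`,
`w̄ = e^{−irh}`:
`20736·∏_{j=1}^{4}(u − Z_j(h)) = 20736u⁴ − 576u²(8 + 3(w − w̄)) + (92 − 39w − 231w̄ + 6w² + 30w̄² − w³ − w̄³)`. -/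
theorem four_strand_three_lobe_braid_polynomial (r : ℕ) (hr : 1 ≤ r) (u : ℂ) (h : ℝ) :
    20736 * ∏ j ∈ Finset.Icc (1 : ℕ) 4,
        (u - ((((1 / 2 : ℝ) * Real.cos ((r * h + 2 * Real.pi * ((j : ℝ) - 1)) / 4) : ℝ) : ℂ) +
          Complex.I / 6 * ((Real.sin (3 * (r * h + 2 * Real.pi * ((j : ℝ) - 1)) / 4) : ℝ) : ℂ))) =
      20736 * u ^ 4
        - 576 * u ^ 2 * (8 + 3 * (Complex.exp (Complex.I * (r * h : ℝ))
            - Complex.exp (-(Complex.I * (r * h : ℝ)))))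
        + (92 - 39 * Complex.exp (Complex.I * (r * h : ℝ))
            - 231 * Complex.exp (-(Complex.I * (r * h : ℝ)))
            + 6 * Complex.exp (Complex.I * (r * h : ℝ)) ^ 2
            + 30 * Complex.exp (-(Complex.I * (r * h : ℝ))) ^ 2
            - Complex.exp (Complex.I * (r * h : ℝ)) ^ 3
            - Complex.exp (-(Complex.I * (r * h : ℝ))) ^ 3) :=
  four_strand_three_lobe_braid_polynomial_general r u h
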